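/- Suppose the following holds: for every syndetic set S ⊆ ℤ, the difference set S − S is a Bohr₀ set. Then for every syndetic A ⊆ ℤ with 0 ∈ A and A = −A, the triple sumset A + A + A is a Bohr₀ set. Conversely, if there exists a syndetic A ⊆ ℤ with A − A not a Bohr₀ set, then the set A₀ := (4A + 1) ∪ −(4A + 1) ∪ {0} is syndetic, symmetric, contains 0, and A₀ + A₀ + A₀ is not a Bohr₀ set; in particular (A₀+A₀+A₀)/4 ⊆ A − A. -/
import Mathlib


open Function Set Pointwise

noncomputable section

abbrev Torus := AddCircle (1 : ℝ)

/-- `S ⊆ ℤ` is syndetic: finitely many translates of `S` cover `ℤ`. -/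
def SyndeticZ (S : Set ℤ) : Prop := ∃ F : Finset ℤ, ∀ n : ℤ, ∃ t ∈ F, n + t ∈ S

/-- `A ⊆ ℤ` is a Bohr₀ set: it contains `{n : ‖nα‖ < δ}` for some `δ > 0`,
`d ∈ ℕ`, `α ∈ 𝕋^d`. -/
def IsBohr0Z (A : Set ℤ) : Prop :=
  ∃ (d : ℕ) (α : Fin d → Torus) (δ : ℝ), 0 < δ ∧
    ∀ n : ℤ, (∑ i, ‖n • α i‖) < δ → n ∈ A

lemma mem_A0 {A : Set ℤ} (hA : A.Nonempty) {u : ℤ}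
    (hu : u ∈ ((fun n => 4 * n + 1) '' A) ∪ ((fun n => -(4 * n + 1)) '' A) ∪ {0}) :
    ∃ a ∈ A, ∃ ε : ℤ, (ε = 1 ∨ ε = -1 ∨ ε = 0) ∧ u = ε * (4 * a + 1) := by
  obtain ⟨a₀, ha₀⟩ := hA
  rcases hu with (⟨a, ha, rfl⟩ | ⟨a, ha, rfl⟩) | rfl
  · exact ⟨a, ha, 1, Or.inl rfl, by ring⟩
  · exact ⟨a, ha, -1, Or.inr (Or.inl rfl), by ring⟩
  · exact ⟨a₀, ha₀, 0, Or.inr (Or.inr rfl), by ring⟩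

lemma key {A : Set ℤ} (hA : A.Nonempty) {n : ℤ}
    (hn : 4 * n ∈ (((fun n => 4 * n + 1) '' A) ∪ ((fun n => -(4 * n + 1)) '' A) ∪ {0}) +
          ((((fun n => 4 * n + 1) '' A) ∪ ((fun n => -(4 * n + 1)) '' A) ∪ {0})) +
          ((((fun n => 4 * n + 1) '' A) ∪ ((fun n => -(4 * n + 1)) '' A) ∪ {0}))) :
    n ∈ A - A := by
  rw [Set.mem_add] at hn
  obtain ⟨xy, hxy, z, hz, hsum⟩ := hn
  rw [Set.mem_add] at hxy
  obtain ⟨x, hx, y, hy, rfl⟩ := hxy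
  obtain ⟨a, ha, ε₁, hε₁, rfl⟩ := mem_A0 hA hx
  obtain ⟨b, hb, ε₂, hε₂, rfl⟩ := mem_A0 hA hy
  obtain ⟨c, hc, ε₃, hε₃, rfl⟩ := mem_A0 hA hz
  rw [Set.mem_sub]
  rcases hε₁ with rfl | rfl | rfl <;> rcases hε₂ with rfl | rfl | rfl <;>
    rcases hε₃ with rfl | rfl | rfl <;>
    first
      | exact ⟨a, ha, b, hb, by omega⟩
      | exact ⟨a, ha, c, hc, by omega⟩
      | exact ⟨b, hb, a, ha, by omega⟩
      | exact ⟨b, hb, c, hc, by omega⟩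
      | exact ⟨c, hc, a, ha, by omega⟩
      | exact ⟨c, hc, b, hb, by omega⟩
      | exact ⟨a, ha, a, ha, by omega⟩

theorem katznelson_iff_triple_sumset :
    ((∀ S : Set ℤ, SyndeticZ S → IsBohr0Z (S - S)) →
      ∀ A : Set ℤ, SyndeticZ A → (0 : ℤ) ∈ A → A = -A → IsBohr0Z (A + A + A)) ∧
    (∀ A : Set ℤ, SyndeticZ A → ¬ IsBohr0Z (A - A) →
      SyndeticZ (((fun n => 4 * n + 1) '' A) ∪ ((fun n => -(4 * n + 1)) '' A) ∪ {0}) ∧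
      (((fun n => 4 * n + 1) '' A) ∪ ((fun n => -(4 * n + 1)) '' A) ∪ {0}) =
        -((((fun n => 4 * n + 1) '' A) ∪ ((fun n => -(4 * n + 1)) '' A) ∪ {0})) ∧
      (0 : ℤ) ∈ (((fun n => 4 * n + 1) '' A) ∪ ((fun n => -(4 * n + 1)) '' A) ∪ {0}) ∧
      ¬ IsBohr0Z ((((fun n => 4 * n + 1) '' A) ∪ ((fun n => -(4 * n + 1)) '' A) ∪ {0}) +
          ((((fun n => 4 * n + 1) '' A) ∪ ((fun n => -(4 * n + 1)) '' A) ∪ {0})) +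
          ((((fun n => 4 * n + 1) '' A) ∪ ((fun n => -(4 * n + 1)) '' A) ∪ {0}))) ∧
      {n : ℤ | 4 * n ∈ (((fun n => 4 * n + 1) '' A) ∪ ((fun n => -(4 * n + 1)) '' A) ∪ {0}) +
          ((((fun n => 4 * n + 1) '' A) ∪ ((fun n => -(4 * n + 1)) '' A) ∪ {0})) +
          ((((fun n => 4 * n + 1) '' A) ∪ ((fun n => -(4 * n + 1)) '' A) ∪ {0}))} ⊆ A - A) := by
  constructor
  · intro h A hS h0 hsym
    obtain ⟨d, α, δ, hδ, hcov⟩ := h A hS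
    refine ⟨d, α, δ, hδ, fun n hn => ?_⟩
    have hn' : n ∈ A - A := hcov n hn
    rw [Set.mem_sub] at hn'
    obtain ⟨a, ha, b, hb, rfl⟩ := hn'
    have hnb : -b ∈ A := by rw [hsym]; simpa using hb
    have : a - b = a + -b + 0 := by ring
    rw [this]
    exact Set.add_mem_add (Set.add_mem_add ha hnb) h0
  · intro A hA hnB
    obtain ⟨F, hF⟩ := hA
    have hAne : A.Nonempty := by
      obtain ⟨t, _, hmem⟩ := hF 0
      exact ⟨0 + t, hmem⟩
    refine ⟨?_, ?_, ?_, ?_, fun n hn => key hAne hn⟩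
    · refine ⟨(F ×ˢ ({0, 1, 2, 3} : Finset ℤ)).image (fun p => 4 * p.1 + 1 - p.2),
        fun n => ?_⟩
      obtain ⟨t, ht, hqt⟩ := hF (n / 4)
      refine ⟨4 * t + 1 - n % 4, ?_, ?_⟩
      · exact Finset.mem_image.mpr ⟨(t, n % 4), Finset.mem_product.mpr
          ⟨ht, by simp only [Finset.mem_insert, Finset.mem_singleton]; omega⟩, rfl⟩
      · exact Or.inl (Or.inl ⟨n / 4 + t, hqt, show 4 * (n / 4 + t) + 1 = n + (4 * t + 1 - n % 4) by omega⟩)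
    · ext x
      simp only [Set.mem_neg]
      constructor
      · rintro ((⟨a, ha, rfl⟩ | ⟨a, ha, rfl⟩) | rfl)
        · exact Or.inl (Or.inr ⟨a, ha, by ring⟩)
        · exact Or.inl (Or.inl ⟨a, ha, by ring⟩)
        · exact Or.inr (by simp)
      · rintro ((⟨a, ha, h⟩ | ⟨a, ha, h⟩) | h)
        · exact Or.inl (Or.inr ⟨a, ha, by simp at h ⊢; omega⟩)
        · exact Or.inl (Or.inl ⟨a, ha, by simp at h ⊢; omega⟩)
        · simp at h; exact Or.inr (by simp [h])
    · exact Or.inr rfl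
    · rintro ⟨d, α, δ, hδ, hcov⟩
      apply hnB
      refine ⟨d, fun i => (4 : ℤ) • α i, δ, hδ, fun n hn => ?_⟩
      have h4 : (∑ i, ‖(4 * n) • α i‖) < δ := by
        simpa [smul_smul, mul_comm] using hn
      exact key hAne (hcov (4 * n) h4)
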